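/- Let F ∈ ℂ[x₁,x₂,x₃] be an irreducible homogeneous polynomial of degree m ≥ 1 such that d_H(F) = P·F for some P ∈ ℂ[x₁,x₂,x₃], and suppose F is not a scalar multiple of F₁ = x₁−x₂ and not a scalar multiple of F₂ = x₂−x₃. Then P = α·P₃ for some α ∈ ℂ, where P₃ = −2x₂. -/

import Mathlib

open MvPolynomial

/-- Components of the Halphen vector field:
`V₁ = x₂x₃ − x₁(x₂+x₃)`, `V₂ = x₃x₁ − x₂(x₃+x₁)`, `V₃ = x₁x₂ − x₃(x₁+x₂)`. -/
noncomputable def V1 : MvPolynomial (Fin 3) ℂ := X 1 * X 2 - X 0 * (X 1 + X 2)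
noncomputable def V2 : MvPolynomial (Fin 3) ℂ := X 2 * X 0 - X 1 * (X 2 + X 0)
noncomputable def V3 : MvPolynomial (Fin 3) ℂ := X 0 * X 1 - X 2 * (X 0 + X 1)

/-- The Halphen derivation `d_H(F) = V₁∂₁F + V₂∂₂F + V₃∂₃F` on `ℂ[x₁,x₂,x₃]`. -/
noncomputable def dH (F : MvPolynomial (Fin 3) ℂ) : MvPolynomial (Fin 3) ℂ :=
  V1 * pderiv 0 F + V2 * pderiv 1 F + V3 * pderiv 2 F

namespace HalphenAux

lemma degree_fin3 (d : Fin 3 →₀ ℕ) : d.degree = d 0 + d 1 + d 2 := by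
  rw [Finsupp.degree_apply]
  rw [Finset.sum_subset (Finset.subset_univ d.support)
    (fun x _ hx => Finsupp.notMem_support_iff.mp hx), Fin.sum_univ_three]

lemma degree_fin2 (d : Fin 2 →₀ ℕ) : d.degree = d 0 + d 1 := by
  rw [Finsupp.degree_apply]
  rw [Finset.sum_subset (Finset.subset_univ d.support)
    (fun x _ hx => Finsupp.notMem_support_iff.mp hx), Fin.sum_univ_two]

lemma isHom_iff {σ : Type*} {φ : MvPolynomial σ ℂ} {n : ℕ} :
    φ.IsHomogeneous n ↔ ∀ d, coeff d φ ≠ 0 → d.degree = n := by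
  unfold MvPolynomial.IsHomogeneous MvPolynomial.IsWeightedHomogeneous
  have h1 : (1 : σ → ℕ) = fun _ => 1 := rfl
  simp_rw [h1, ← Finsupp.degree_eq_weight_one]

noncomputable def tau : MvPolynomial (Fin 3) ℂ →ₐ[ℂ] Polynomial (MvPolynomial (Fin 3) ℂ) :=
  aeval (fun i => Polynomial.C (X i) * Polynomial.X)

lemma tau_apply (Q : MvPolynomial (Fin 3) ℂ) :
    tau Q = ∑ d ∈ Q.support,
      Polynomial.C (monomial d (coeff d Q)) * Polynomial.X ^ d.degree := by
  conv_lhs => rw [← support_sum_monomial_coeff Q]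
  rw [map_sum]
  refine Finset.sum_congr rfl fun d _ => ?_
  rw [tau, aeval_monomial]
  have h1 : (d.prod fun i k => (Polynomial.C (X i : MvPolynomial (Fin 3) ℂ) * Polynomial.X) ^ k)
      = Polynomial.C (d.prod fun i k => (X i : MvPolynomial (Fin 3) ℂ) ^ k)
        * Polynomial.X ^ d.degree := by
    unfold Finsupp.prod
    rw [Finsupp.degree_apply]
    simp only [mul_pow, ← Polynomial.C_pow]
    rw [Finset.prod_mul_distrib, Finset.prod_pow_eq_pow_sum, ← map_prod]
  rw [h1, Polynomial.algebraMap_apply, MvPolynomial.algebraMap_eq, ← mul_assoc,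
    ← Polynomial.C_mul, ← monomial_eq]


lemma coeff_coeff_tau (Q : MvPolynomial (Fin 3) ℂ) (d : Fin 3 →₀ ℕ) (k : ℕ) :
    coeff d ((tau Q).coeff k) = if d.degree = k then coeff d Q else 0 := by
  rw [tau_apply, Polynomial.finset_sum_coeff]
  have h1 : ∀ d' ∈ Q.support,
      (Polynomial.C (monomial d' (coeff d' Q)) * Polynomial.X ^ d'.degree).coeff k
        = if d'.degree = k then monomial d' (coeff d' Q) else 0 := by
    intro d' _
    rw [Polynomial.coeff_C_mul, Polynomial.coeff_X_pow]
    by_cases h : d'.degree = k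
    · simp [h]
    · simp [h, Ne.symm h]
  rw [Finset.sum_congr rfl h1, coeff_sum]
  have h2 : ∀ d' ∈ Q.support,
      coeff d (if d'.degree = k then monomial d' (coeff d' Q) else 0)
        = if d'.degree = k then (if d' = d then coeff d' Q else 0) else 0 := by
    intro d' _
    rw [apply_ite (coeff d), coeff_monomial, coeff_zero]
  rw [Finset.sum_congr rfl h2]
  by_cases hd : d ∈ Q.support
  · rw [Finset.sum_eq_single_of_mem d hd]
    · rw [if_pos rfl]
    · intro b _ hbd
      simp [hbd]
  · rw [Finset.sum_eq_zero]
    · rw [mem_support_iff, not_not] at hd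
      simp [hd]
    · intro b hb
      have hbd : b ≠ d := fun h => hd (h ▸ hb)
      simp [hbd]

lemma tau_of_isHom {Q : MvPolynomial (Fin 3) ℂ} {M : ℕ} (h : Q.IsHomogeneous M) :
    tau Q = Polynomial.C Q * Polynomial.X ^ M := by
  rw [tau_apply]
  conv_rhs => rw [← support_sum_monomial_coeff Q]
  rw [map_sum, Finset.sum_mul]
  refine Finset.sum_congr rfl fun d hd => ?_
  rw [isHom_iff.mp h d (mem_support_iff.mp hd)]

lemma isHom_of_mul_left {A B H : MvPolynomial (Fin 3) ℂ} {k n : ℕ} (hk : k ≤ n)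
    (hA : A.IsHomogeneous k) (hH : H.IsHomogeneous n) (hE : A * B = H) (hA0 : A ≠ 0) :
    B.IsHomogeneous (n - k) := by
  have hτ : tau A * tau B = tau H := by rw [← map_mul, hE]
  rw [tau_of_isHom hA, tau_of_isHom hH] at hτ
  have hX : (Polynomial.X : Polynomial (MvPolynomial (Fin 3) ℂ)) ^ k ≠ 0 :=
    pow_ne_zero _ Polynomial.X_ne_zero
  have h2 : Polynomial.C A * tau B = Polynomial.C H * Polynomial.X ^ (n - k) := by
    apply mul_right_cancel₀ hX
    calc Polynomial.C A * tau B * Polynomial.X ^ k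
        = Polynomial.C A * Polynomial.X ^ k * tau B := by ring
      _ = Polynomial.C H * Polynomial.X ^ n := hτ
      _ = Polynomial.C H * Polynomial.X ^ (n - k) * Polynomial.X ^ k := by
          rw [mul_assoc, ← pow_add, Nat.sub_add_cancel hk]
  rw [isHom_iff]
  intro d hd
  by_contra hne
  have h3 := congrArg (fun p => Polynomial.coeff p d.degree) h2
  simp only [Polynomial.coeff_C_mul, Polynomial.coeff_X_pow] at h3
  rw [if_neg hne, mul_zero] at h3
  have h4 : (tau B).coeff d.degree = 0 := by
    rcases mul_eq_zero.mp h3 with h | h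
    · exact absurd h hA0
    · exact h
  have h5 := coeff_coeff_tau B d d.degree
  rw [h4, if_pos rfl] at h5
  simp only [coeff_zero] at h5
  exact hd h5.symm

lemma pderiv_isHom {F : MvPolynomial (Fin 3) ℂ} {M : ℕ} (h : F.IsHomogeneous M) (i : Fin 3) :
    (pderiv i F).IsHomogeneous (M - 1) := by
  conv_lhs => rw [← support_sum_monomial_coeff F]
  rw [map_sum]
  apply IsHomogeneous.sum
  intro d hd
  rw [pderiv_monomial]
  by_cases h0 : d i = 0
  · rw [h0]
    simp only [Nat.cast_zero, mul_zero, monomial_zero]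
    exact isHomogeneous_zero _ _ _
  · apply isHomogeneous_monomial
    have hdeg := isHom_iff.mp h d (mem_support_iff.mp hd)
    rw [degree_fin3] at hdeg
    rw [degree_fin3]
    simp only [Finsupp.tsub_apply]
    have hs : ∀ j : Fin 3, Finsupp.single i 1 j = if i = j then 1 else 0 :=
      fun j => Finsupp.single_apply
    rw [hs 0, hs 1, hs 2]
    fin_cases i <;> simp_all <;> omega

lemma Xi_mul_pderiv_monomial (i : Fin 3) (d : Fin 3 →₀ ℕ) (c : ℂ) :
    X i * pderiv i (monomial d c) = monomial d (c * (d i : ℂ)) := by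
  rw [pderiv_monomial]
  by_cases h0 : d i = 0
  · simp [h0]
  · have hX : (X i : MvPolynomial (Fin 3) ℂ) = monomial (Finsupp.single i 1) 1 := rfl
    rw [hX, monomial_mul, one_mul]
    have hidx : Finsupp.single i 1 + (d - Finsupp.single i 1) = d := by
      ext j
      simp only [Finsupp.add_apply, Finsupp.tsub_apply]
      have : Finsupp.single i 1 j ≤ d j := by
        rcases eq_or_ne i j with rfl | hij
        · rw [Finsupp.single_eq_same]; omega
        · rw [Finsupp.single_eq_of_ne' hij]; omega
      omega
    rw [hidx]

lemma euler {F : MvPolynomial (Fin 3) ℂ} {M : ℕ} (h : F.IsHomogeneous M) :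
    X 0 * pderiv 0 F + X 1 * pderiv 1 F + X 2 * pderiv 2 F = C (M : ℂ) * F := by
  conv_lhs => rw [← support_sum_monomial_coeff F]
  conv_rhs => rw [← support_sum_monomial_coeff F]
  rw [map_sum (pderiv 0), map_sum (pderiv 1), map_sum (pderiv 2),
    Finset.mul_sum, Finset.mul_sum, Finset.mul_sum,
    ← Finset.sum_add_distrib, ← Finset.sum_add_distrib, Finset.mul_sum]
  refine Finset.sum_congr rfl fun d hd => ?_
  rw [Xi_mul_pderiv_monomial, Xi_mul_pderiv_monomial, Xi_mul_pderiv_monomial, C_mul_monomial,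
    ← map_add, ← map_add]
  congr 1
  have hdeg := isHom_iff.mp h d (mem_support_iff.mp hd)
  rw [degree_fin3] at hdeg
  rw [← hdeg]
  push_cast
  ring


lemma deriv_aeval (j : Fin 3) (F : MvPolynomial (Fin 3) ℂ) :
    Polynomial.derivative
        (aeval (fun i => if i = j then (Polynomial.X : Polynomial ℂ) else 1) F)
      = aeval (fun i => if i = j then (Polynomial.X : Polynomial ℂ) else 1) (pderiv j F) := by
  induction F using MvPolynomial.induction_on with
  | C a => simp only [aeval_C, pderiv_C, map_zero, Polynomial.algebraMap_eq,
      Polynomial.derivative_C]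
  | add p q hp hq => simp only [map_add, hp, hq]
  | mul_X p i hp =>
    simp only [map_mul, pderiv_mul, map_add, Polynomial.derivative_mul, hp]
    congr 1
    rw [aeval_X]
    by_cases hij : i = j
    · subst hij
      rw [if_pos rfl, pderiv_X_self, map_one, Polynomial.derivative_X]
    · simp [if_neg hij, pderiv_X_of_ne hij]

lemma natDegree_zero_of_eq (p f : Polynomial ℂ) (hf : f ≠ 0)
    (h : p * f = (1 - Polynomial.X) * Polynomial.derivative f) : p.natDegree = 0 := by
  by_contra hne
  have hp0 : p ≠ 0 := fun h0 => hne (h0 ▸ Polynomial.natDegree_zero)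
  have hd0 : Polynomial.derivative f ≠ 0 := by
    intro h0
    rw [h0, mul_zero] at h
    rcases mul_eq_zero.mp h with h' | h'
    · exact hp0 h'
    · exact hf h'
  have hfdeg : 1 ≤ f.natDegree := by
    by_contra hh
    push_neg at hh
    have : f.natDegree = 0 := by omega
    exact hd0 (by rw [Polynomial.eq_C_of_natDegree_eq_zero this, Polynomial.derivative_C])
  have h1 : p.natDegree + f.natDegree
      = ((1 - Polynomial.X) * Polynomial.derivative f).natDegree := by
    rw [← h, Polynomial.natDegree_mul hp0 hf]
  have h2 : ((1 - Polynomial.X) * Polynomial.derivative f).natDegree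
      ≤ 1 + (f.natDegree - 1) := by
    refine le_trans (Polynomial.natDegree_mul_le) (add_le_add ?_ (Polynomial.natDegree_derivative_le f))
    refine le_trans (Polynomial.natDegree_sub_le _ _) ?_
    simp
  omega

lemma coeff_aeval {n : ℕ} (j : Fin n) (Q : MvPolynomial (Fin n) ℂ) (k : ℕ) :
    (aeval (fun i => if i = j then (Polynomial.X : Polynomial ℂ) else 1) Q).coeff k
      = ∑ d ∈ Q.support.filter (fun d => d j = k), coeff d Q := by
  rw [aeval_def, eval₂_eq', Polynomial.finset_sum_coeff, Finset.sum_filter]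
  refine Finset.sum_congr rfl fun d _ => ?_
  have hprod : (∏ i, (if i = j then (Polynomial.X : Polynomial ℂ) else 1) ^ d i)
      = Polynomial.X ^ d j := by
    rw [Finset.prod_eq_single j (fun i _ hij => by rw [if_neg hij, one_pow])
      (fun h => absurd (Finset.mem_univ j) h), if_pos rfl]
  rw [hprod, Polynomial.algebraMap_eq, Polynomial.coeff_C_mul, Polynomial.coeff_X_pow]
  by_cases h : d j = k
  · simp [h]
  · simp [h, Ne.symm h]

lemma dvd_sub_rename01 (F : MvPolynomial (Fin 3) ℂ) :
    (X 0 - X 1 : MvPolynomial (Fin 3) ℂ) ∣ F - rename ![1, 1, 2] F := by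
  induction F using MvPolynomial.induction_on with
  | C a => rw [rename_C, sub_self]; exact dvd_zero _
  | add p q hp hq =>
    rw [map_add]
    have he : p + q - (rename ![1,1,2] p + rename ![1,1,2] q)
        = (p - rename ![1,1,2] p) + (q - rename ![1,1,2] q) := by ring
    rw [he]; exact dvd_add hp hq
  | mul_X p i hp =>
    rw [map_mul, rename_X]
    have he : p * X i - rename ![1,1,2] p * X (![1,1,2] i)
        = (p - rename ![1,1,2] p) * X i
          + rename ![1,1,2] p * (X i - X (![1,1,2] i)) := by ring
    rw [he]
    have hdiv : ∀ i : Fin 3, (X 0 - X 1 : MvPolynomial (Fin 3) ℂ) ∣ (X i - X (![1,1,2] i)) := by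
      intro i
      fin_cases i
      · show (X 0 - X 1 : MvPolynomial (Fin 3) ℂ) ∣ X 0 - X 1
        exact dvd_rfl
      · show (X 0 - X 1 : MvPolynomial (Fin 3) ℂ) ∣ X 1 - X 1
        simp
      · show (X 0 - X 1 : MvPolynomial (Fin 3) ℂ) ∣ X 2 - X 2
        simp
    exact dvd_add (hp.mul_right _) ((hdiv i).mul_left _)

lemma dvd_sub_rename12 (F : MvPolynomial (Fin 3) ℂ) :
    (X 1 - X 2 : MvPolynomial (Fin 3) ℂ) ∣ F - rename ![0, 1, 1] F := by
  induction F using MvPolynomial.induction_on with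
  | C a => rw [rename_C, sub_self]; exact dvd_zero _
  | add p q hp hq =>
    rw [map_add]
    have he : p + q - (rename ![0,1,1] p + rename ![0,1,1] q)
        = (p - rename ![0,1,1] p) + (q - rename ![0,1,1] q) := by ring
    rw [he]; exact dvd_add hp hq
  | mul_X p i hp =>
    rw [map_mul, rename_X]
    have he : p * X i - rename ![0,1,1] p * X (![0,1,1] i)
        = (p - rename ![0,1,1] p) * X i
          + rename ![0,1,1] p * (X i - X (![0,1,1] i)) := by ring
    rw [he]
    have hdiv : ∀ i : Fin 3, (X 1 - X 2 : MvPolynomial (Fin 3) ℂ) ∣ (X i - X (![0,1,1] i)) := by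
      intro i
      fin_cases i
      · show (X 1 - X 2 : MvPolynomial (Fin 3) ℂ) ∣ X 0 - X 0
        simp
      · show (X 1 - X 2 : MvPolynomial (Fin 3) ℂ) ∣ X 1 - X 1
        simp
      · show (X 1 - X 2 : MvPolynomial (Fin 3) ℂ) ∣ X 2 - X 1
        exact ⟨-1, by ring⟩
    exact dvd_add (hp.mul_right _) ((hdiv i).mul_left _)

lemma aeval_ne_zero_fin2 {G : MvPolynomial (Fin 2) ℂ} {M : ℕ} (j : Fin 2)
    (hG : G.IsHomogeneous M) (h0 : G ≠ 0) :
    aeval (fun i => if i = j then (Polynomial.X : Polynomial ℂ) else 1) G ≠ 0 := by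
  obtain ⟨d0, hd0⟩ := exists_coeff_ne_zero h0
  intro hzero
  have hc := coeff_aeval j G (d0 j)
  rw [hzero, Polynomial.coeff_zero] at hc
  have hfilter : G.support.filter (fun d => d j = d0 j) = {d0} := by
    ext d
    simp only [Finset.mem_filter, mem_support_iff, Finset.mem_singleton]
    constructor
    · rintro ⟨hds, hdj⟩
      have e1 := isHom_iff.mp hG d hds
      have e2 := isHom_iff.mp hG d0 hd0
      rw [degree_fin2] at e1 e2
      ext i
      fin_cases j <;> fin_cases i <;> simp_all <;> omega
    · rintro rfl; exact ⟨hd0, rfl⟩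
  rw [hfilter, Finset.sum_singleton] at hc
  exact hd0 hc.symm

lemma eq_single_of_degree_one (d : Fin 3 →₀ ℕ) (h : d.degree = 1) :
    d = Finsupp.single 0 1 ∨ d = Finsupp.single 1 1 ∨ d = Finsupp.single 2 1 := by
  rw [degree_fin3] at h
  have h3 : (d 0 = 1 ∧ d 1 = 0 ∧ d 2 = 0) ∨ (d 0 = 0 ∧ d 1 = 1 ∧ d 2 = 0)
      ∨ (d 0 = 0 ∧ d 1 = 0 ∧ d 2 = 1) := by omega
  rcases h3 with ⟨a, b, c⟩ | ⟨a, b, c⟩ | ⟨a, b, c⟩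
  · left; ext i; fin_cases i <;> simp_all [Finsupp.single_apply]
  · right; left; ext i; fin_cases i <;> simp_all [Finsupp.single_apply]
  · right; right; ext i; fin_cases i <;> simp_all [Finsupp.single_apply]

lemma not_dvd_line (F : MvPolynomial (Fin 3) ℂ) (m : ℕ) (hm : 1 ≤ m)
    (hhom : F.IsHomogeneous m) (hirr : Irreducible F)
    (i j : Fin 3) (hij : i ≠ j) (hF : ¬ ∃ c : ℂ, F = C c * (X i - X j))
    (hdvd : (X i - X j : MvPolynomial (Fin 3) ℂ) ∣ F) : False := by
  obtain ⟨Q0, hQ0⟩ := hdvd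
  have hXij0 : (X i - X j : MvPolynomial (Fin 3) ℂ) ≠ 0 := by
    intro hz
    have hcz := congrArg (eval (fun k : Fin 3 => if k = i then (1 : ℂ) else 0)) hz
    rw [map_sub, map_zero, eval_X, eval_X, if_pos rfl, if_neg (Ne.symm hij)] at hcz
    norm_num at hcz
  have hunit : IsUnit Q0 := by
    rcases hirr.isUnit_or_isUnit hQ0 with h | h
    · exfalso
      have hu := h.map (eval (fun _ => (1 : ℂ)))
      rw [map_sub, eval_X, eval_X, sub_self] at hu
      rw [isUnit_zero_iff] at hu
      exact zero_ne_one hu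
    · exact h
  have hXijhom : (X i - X j : MvPolynomial (Fin 3) ℂ).IsHomogeneous 1 :=
    (isHomogeneous_X _ i).sub (isHomogeneous_X _ j)
  have hQ0hom : Q0.IsHomogeneous (m - 1) :=
    isHom_of_mul_left hm hXijhom hhom hQ0.symm hXij0
  rcases Nat.lt_or_ge 1 m with h2 | h2
  · have hc : constantCoeff Q0 = 0 := by
      rw [constantCoeff_eq]
      exact hQ0hom.coeff_eq_zero (by rw [map_zero]; omega)
    have hu := hunit.map (constantCoeff : MvPolynomial (Fin 3) ℂ →+* ℂ)
    rw [hc, isUnit_zero_iff] at hu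
    exact zero_ne_one hu
  · have hm1 : m - 1 = 0 := by omega
    have hQ0c : Q0 = C (coeff 0 Q0) := by
      ext d
      rw [coeff_C]
      by_cases hd : (0 : Fin 3 →₀ ℕ) = d
      · rw [if_pos hd, ← hd]
      · rw [if_neg hd]
        refine hQ0hom.coeff_eq_zero ?_
        rw [hm1]
        intro hdeg
        exact hd ((Finsupp.degree_eq_zero_iff d).mp hdeg).symm
    refine hF ⟨coeff 0 Q0, ?_⟩
    conv_lhs => rw [hQ0, hQ0c]
    exact mul_comm _ _


noncomputable def wvar (j : Fin 3) : Fin 3 → Polynomial ℂ :=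
  fun i => if i = j then Polynomial.X else 1

lemma deriv_aeval' (j : Fin 3) (F : MvPolynomial (Fin 3) ℂ) :
    Polynomial.derivative (aeval (wvar j) F) = aeval (wvar j) (pderiv j F) :=
  deriv_aeval j F

lemma coeff_aeval3 (j : Fin 3) (Q : MvPolynomial (Fin 3) ℂ) (k : ℕ) :
    (aeval (wvar j) Q).coeff k = ∑ d ∈ Q.support.filter (fun d => d j = k), coeff d Q :=
  coeff_aeval j Q k

lemma wvar20 : wvar 2 0 = 1 := if_neg (by decide)
lemma wvar21 : wvar 2 1 = 1 := if_neg (by decide)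
lemma wvar22 : wvar 2 2 = Polynomial.X := if_pos rfl
lemma wvar00 : wvar 0 0 = Polynomial.X := if_pos rfl
lemma wvar01 : wvar 0 1 = 1 := if_neg (by decide)
lemma wvar02 : wvar 0 2 = 1 := if_neg (by decide)

lemma caseA (F P : MvPolynomial (Fin 3) ℂ) (m : ℕ) (hm : 1 ≤ m)
    (hhom : F.IsHomogeneous m) (hirr : Irreducible F)
    (hD : dH F = P * F) (hF1 : ¬ ∃ c : ℂ, F = C c * (X 0 - X 1)) :
    (aeval (wvar 2) P).coeff 1 = 0 := by
  have hG : (rename ![0,0,1] F : MvPolynomial (Fin 2) ℂ) ≠ 0 := by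
    intro hG0
    apply not_dvd_line F m hm hhom hirr 0 1 (by decide) hF1
    have hcomp : (![1,2] : Fin 2 → Fin 3) ∘ (![0,0,1] : Fin 3 → Fin 2) = ![1,1,2] := by
      funext i; fin_cases i <;> rfl
    have h1 : rename (![1,1,2] : Fin 3 → Fin 3) F = 0 := by
      rw [← hcomp, ← rename_rename, hG0, map_zero]
    have h2 := dvd_sub_rename01 F
    rw [h1, sub_zero] at h2
    exact h2
  have hfeq : aeval (fun i => if i = (1 : Fin 2) then (Polynomial.X : Polynomial ℂ) else 1)
      (rename ![0,0,1] F) = aeval (wvar 2) F := by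
    have hcomp : (fun i => if i = (1 : Fin 2) then (Polynomial.X : Polynomial ℂ) else 1)
        ∘ (![0,0,1] : Fin 3 → Fin 2) = wvar 2 := by
      funext i; fin_cases i <;> simp [wvar]
    rw [aeval_rename, hcomp]
  have hf : aeval (wvar 2) F ≠ 0 := by
    rw [← hfeq]
    exact aeval_ne_zero_fin2 1 hhom.rename_isHomogeneous hG
  have hop : aeval (wvar 2) (dH F) = aeval (wvar 2) P * aeval (wvar 2) F := by
    rw [hD, map_mul]
  have heuler := congrArg (aeval (wvar 2)) (euler hhom)
  simp only [map_add, map_mul, aeval_X, aeval_C, wvar20, wvar21, wvar22,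
    Polynomial.algebraMap_eq] at heuler
  rw [dH, map_add, map_add, map_mul, map_mul, map_mul] at hop
  have hV1 : aeval (wvar 2) V1 = -1 := by
    rw [V1, map_sub, map_mul, map_mul, map_add, aeval_X, aeval_X, aeval_X,
      wvar20, wvar21, wvar22]; ring
  have hV2 : aeval (wvar 2) V2 = -1 := by
    rw [V2, map_sub, map_mul, map_mul, map_add, aeval_X, aeval_X, aeval_X,
      wvar20, wvar21, wvar22]; ring
  have hV3 : aeval (wvar 2) V3 = 1 - 2 * Polynomial.X := by
    rw [V3, map_sub, map_mul, map_mul, map_add, aeval_X, aeval_X, aeval_X,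
      wvar20, wvar21, wvar22]; ring
  rw [hV1, hV2, hV3] at hop
  have hkey : (aeval (wvar 2) P + Polynomial.C (m : ℂ)) * aeval (wvar 2) F
      = (1 - Polynomial.X) * Polynomial.derivative (aeval (wvar 2) F) := by
    rw [deriv_aeval']
    linear_combination - hop - heuler
  have hnd := natDegree_zero_of_eq _ _ hf hkey
  have h1 : (aeval (wvar 2) P + Polynomial.C (m : ℂ)).coeff 1 = 0 :=
    Polynomial.coeff_eq_zero_of_natDegree_lt (by omega)
  rw [Polynomial.coeff_add, Polynomial.coeff_C] at h1
  simpa using h1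

lemma caseB (F P : MvPolynomial (Fin 3) ℂ) (m : ℕ) (hm : 1 ≤ m)
    (hhom : F.IsHomogeneous m) (hirr : Irreducible F)
    (hD : dH F = P * F) (hF2 : ¬ ∃ c : ℂ, F = C c * (X 1 - X 2)) :
    (aeval (wvar 0) P).coeff 1 = 0 := by
  have hG : (rename ![0,1,1] F : MvPolynomial (Fin 2) ℂ) ≠ 0 := by
    intro hG0
    apply not_dvd_line F m hm hhom hirr 1 2 (by decide) hF2
    have hcomp : (![0,1] : Fin 2 → Fin 3) ∘ (![0,1,1] : Fin 3 → Fin 2) = ![0,1,1] := by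
      funext i; fin_cases i <;> rfl
    have h1 : rename (![0,1,1] : Fin 3 → Fin 3) F = 0 := by
      rw [← hcomp, ← rename_rename, hG0, map_zero]
    have h2 := dvd_sub_rename12 F
    rw [h1, sub_zero] at h2
    exact h2
  have hfeq : aeval (fun i => if i = (0 : Fin 2) then (Polynomial.X : Polynomial ℂ) else 1)
      (rename ![0,1,1] F) = aeval (wvar 0) F := by
    have hcomp : (fun i => if i = (0 : Fin 2) then (Polynomial.X : Polynomial ℂ) else 1)
        ∘ (![0,1,1] : Fin 3 → Fin 2) = wvar 0 := by
      funext i; fin_cases i <;> simp [wvar]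
    rw [aeval_rename, hcomp]
  have hf : aeval (wvar 0) F ≠ 0 := by
    rw [← hfeq]
    exact aeval_ne_zero_fin2 0 hhom.rename_isHomogeneous hG
  have hop : aeval (wvar 0) (dH F) = aeval (wvar 0) P * aeval (wvar 0) F := by
    rw [hD, map_mul]
  have heuler := congrArg (aeval (wvar 0)) (euler hhom)
  simp only [map_add, map_mul, aeval_X, aeval_C, wvar00, wvar01, wvar02,
    Polynomial.algebraMap_eq] at heuler
  rw [dH, map_add, map_add, map_mul, map_mul, map_mul] at hop
  have hV1 : aeval (wvar 0) V1 = 1 - 2 * Polynomial.X := by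
    rw [V1, map_sub, map_mul, map_mul, map_add, aeval_X, aeval_X, aeval_X,
      wvar00, wvar01, wvar02]; ring
  have hV2 : aeval (wvar 0) V2 = -1 := by
    rw [V2, map_sub, map_mul, map_mul, map_add, aeval_X, aeval_X, aeval_X,
      wvar00, wvar01, wvar02]; ring
  have hV3 : aeval (wvar 0) V3 = -1 := by
    rw [V3, map_sub, map_mul, map_mul, map_add, aeval_X, aeval_X, aeval_X,
      wvar00, wvar01, wvar02]; ring
  rw [hV1, hV2, hV3] at hop
  have hkey : (aeval (wvar 0) P + Polynomial.C (m : ℂ)) * aeval (wvar 0) F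
      = (1 - Polynomial.X) * Polynomial.derivative (aeval (wvar 0) F) := by
    rw [deriv_aeval']
    linear_combination - hop - heuler
  have hnd := natDegree_zero_of_eq _ _ hf hkey
  have h1 : (aeval (wvar 0) P + Polynomial.C (m : ℂ)).coeff 1 = 0 :=
    Polynomial.coeff_eq_zero_of_natDegree_lt (by omega)
  rw [Polynomial.coeff_add, Polynomial.coeff_C] at h1
  simpa using h1

end HalphenAux

open HalphenAux in
/-- If `F ∈ ℂ[x₁,x₂,x₃]` is an irreducible homogeneous polynomial of
degree `m ≥ 1` with `d_H(F) = P·F`, and `F` is not a scalar multiple of `F₁ = x₁−x₂`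
nor of `F₂ = x₂−x₃`, then `P = α·P₃` for some `α ∈ ℂ`, where `P₃ = −2x₂`. -/
theorem halphen_darboux_eigenvalue_P3
    (F P : MvPolynomial (Fin 3) ℂ) (m : ℕ) (hm : 1 ≤ m)
    (hhom : F.IsHomogeneous m) (hirr : Irreducible F)
    (hD : dH F = P * F)
    (hF1 : ¬ ∃ c : ℂ, F = C c * (X 0 - X 1))
    (hF2 : ¬ ∃ c : ℂ, F = C c * (X 1 - X 2)) :
    ∃ α : ℂ, P = C α * (-(C 2 * X 1)) := by
  have hV1h : (V1).IsHomogeneous 2 := by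
    rw [V1]
    exact ((isHomogeneous_X _ _).mul (isHomogeneous_X _ _)).sub
      ((isHomogeneous_X _ _).mul ((isHomogeneous_X _ _).add (isHomogeneous_X _ _)))
  have hV2h : (V2).IsHomogeneous 2 := by
    rw [V2]
    exact ((isHomogeneous_X _ _).mul (isHomogeneous_X _ _)).sub
      ((isHomogeneous_X _ _).mul ((isHomogeneous_X _ _).add (isHomogeneous_X _ _)))
  have hV3h : (V3).IsHomogeneous 2 := by
    rw [V3]
    exact ((isHomogeneous_X _ _).mul (isHomogeneous_X _ _)).sub
      ((isHomogeneous_X _ _).mul ((isHomogeneous_X _ _).add (isHomogeneous_X _ _)))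
  have he : 2 + (m - 1) = m + 1 := by omega
  have hdH : (dH F).IsHomogeneous (m + 1) := by
    rw [dH]
    exact ((he ▸ hV1h.mul (pderiv_isHom hhom 0)).add
      (he ▸ hV2h.mul (pderiv_isHom hhom 1))).add (he ▸ hV3h.mul (pderiv_isHom hhom 2))
  have hP1 : P.IsHomogeneous 1 := by
    have h := isHom_of_mul_left (Nat.le_succ m) hhom hdH
      ((mul_comm F P).trans hD.symm) hirr.ne_zero
    have e2 : m + 1 - m = 1 := by omega
    rwa [e2] at h
  have hA := caseA F P m hm hhom hirr hD hF1
  have hB := caseB F P m hm hhom hirr hD hF2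
  rw [coeff_aeval3] at hA hB
  have hc2 : coeff (Finsupp.single 2 1) P = 0 := by
    by_cases hmem : Finsupp.single (2 : Fin 3) 1 ∈ P.support
    · have hfil : P.support.filter (fun d => d (2 : Fin 3) = 1) = {Finsupp.single 2 1} := by
        ext d
        simp only [Finset.mem_filter, mem_support_iff, Finset.mem_singleton]
        constructor
        · rintro ⟨hds, hd2⟩
          have e1 := isHom_iff.mp hP1 d hds
          rw [degree_fin3] at e1
          have h0 : d 0 = 0 := by omega
          have h1 : d 1 = 0 := by omega
          ext a
          fin_cases a <;> simp [Finsupp.single_apply, h0, h1, hd2]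
        · rintro rfl
          exact ⟨mem_support_iff.mp hmem, Finsupp.single_eq_same⟩
      rw [hfil, Finset.sum_singleton] at hA
      exact hA
    · by_contra hne
      exact hmem (mem_support_iff.mpr hne)
  have hc0 : coeff (Finsupp.single 0 1) P = 0 := by
    by_cases hmem : Finsupp.single (0 : Fin 3) 1 ∈ P.support
    · have hfil : P.support.filter (fun d => d (0 : Fin 3) = 1) = {Finsupp.single 0 1} := by
        ext d
        simp only [Finset.mem_filter, mem_support_iff, Finset.mem_singleton]
        constructor
        · rintro ⟨hds, hd0⟩
          have e1 := isHom_iff.mp hP1 d hds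
          rw [degree_fin3] at e1
          have h1 : d 1 = 0 := by omega
          have h2 : d 2 = 0 := by omega
          ext a
          fin_cases a <;> simp [Finsupp.single_apply, h1, h2, hd0]
        · rintro rfl
          exact ⟨mem_support_iff.mp hmem, Finsupp.single_eq_same⟩
      rw [hfil, Finset.sum_singleton] at hB
      exact hB
    · by_contra hne
      exact hmem (mem_support_iff.mpr hne)
  refine ⟨-(coeff (Finsupp.single 1 1) P) / 2, ?_⟩
  ext d
  simp only [coeff_C_mul, coeff_neg, coeff_X']
  by_cases hd : Finsupp.single (1 : Fin 3) 1 = d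
  · rw [if_pos hd, ← hd]
    field_simp
  · rw [if_neg hd]
    simp only [mul_zero, neg_zero]
    by_contra hne
    have hdeg := isHom_iff.mp hP1 d hne
    rcases eq_single_of_degree_one d hdeg with h | h | h
    · exact hne (h ▸ hc0)
    · exact hd h.symm
    · exact hne (h ▸ hc2)
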